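/- Let r ≥ 1 and let u_0, ..., u_{r-1} be indeterminates over ℚ. Define u_{-1} = u_r = 1 and x_i = (u_{i-1} + u_{i+1})/u_i for 0 ≤ i ≤ r−1 in the field ℚ(u_0, ..., u_{r-1}). Then P_{r+1}(x_0, x_1, ..., x_{r-1}, u_{r-1}) = 1. -/

import Mathlib

open MvPolynomial Polynomial

/-- Generalized Chebyshev evaluation: `cheb n t = P_n(t 0, ..., t (n-1))`,
where `P_0 = 1`, `P_1(t_0) = t_0`, and
`P_{n+1}(t_0,...,t_n) = t_n * P_n(t_0,...,t_{n-1}) - P_{n-1}(t_0,...,t_{n-2})`. -/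
def cheb {R : Type*} [CommRing R] : ℕ → (ℕ → R) → R
  | 0, _ => 1
  | 1, t => t 0
  | (n + 2), t => t (n + 1) * cheb (n + 1) t - cheb n t

/-- The field `ℚ(u_0, ..., u_{r-1})`. -/
abbrev FF (r : ℕ) := FractionRing (MvPolynomial (Fin r) ℚ)

/-- The indeterminates `u_i` for `0 ≤ i < r`, extended by `u_i = 1` outside this range
(so that `u_{-1} = u_r = 1`). -/
noncomputable def uu (r : ℕ) (i : ℤ) : FF r :=
  if h : 0 ≤ i ∧ i < r then
    algebraMap (MvPolynomial (Fin r) ℚ) (FF r) (X (⟨i.toNat, by omega⟩ : Fin r))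
  else 1

/-- The cluster characters of the simple modules: `x_i = (u_{i-1} + u_{i+1}) / u_i`. -/
noncomputable def xx (r : ℕ) (i : ℤ) : FF r := (uu r (i - 1) + uu r (i + 1)) / uu r i

/-!
Since `x_i u_i = u_{i-1} + u_{i+1}`, the sequence `(u_i)` solves the three-term recurrence
whose fundamental solution is `(P_n)`, so the Casoratian `P_{n+1} u_n - P_n u_{n+1}` is constant,
equal to its value `u_{-1} = 1` at `n = 0`. At `n = r - 1`, where `u_r = 1`, the Casoratian is
`u_{r-1} P_r - P_{r-1} = P_{r+1}(x_0, ..., x_{r-1}, u_{r-1})`.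
-/

theorem cheb_add_two {R : Type*} [CommRing R] (n : ℕ) (t : ℕ → R) :
    cheb (n + 2) t = t (n + 1) * cheb (n + 1) t - cheb n t :=
  rfl

theorem cheb_casoratian {R : Type*} [CommRing R] (t : ℕ → R) (u : ℤ → R) (n : ℕ)
    (h : ∀ k : ℕ, k ≤ n → t k * u k = u (k - 1) + u (k + 1)) :
    cheb (n + 1) t * u n - cheb n t * u (n + 1) = u (-1) := by
  induction n with
  | zero =>
    have step : t 0 * u 0 = u (-1) + u 1 := by simpa using h 0 le_rfl
    simp only [cheb, Nat.cast_zero, zero_add]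
    linear_combination step
  | succ n ih =>
    have step : t (n + 1) * u (n + 1) = u n + u (n + 1 + 1) := by
      simpa using h (n + 1) le_rfl
    rw [cheb_add_two, ← ih fun k hk => h k (by omega)]
    push_cast
    linear_combination cheb (n + 1) t * step

theorem uu_ne_zero {r : ℕ} {i : ℤ} (h0 : 0 ≤ i) (h1 : i < r) : uu r i ≠ 0 := by
  rw [uu, dif_pos ⟨h0, h1⟩]
  exact (map_ne_zero_iff _ (IsFractionRing.injective _ _)).mpr (X_ne_zero _)

theorem uu_eq_one {r : ℕ} {i : ℤ} (h : ¬(0 ≤ i ∧ i < r)) : uu r i = 1 :=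
  dif_neg h

theorem xx_mul_uu {r : ℕ} {i : ℤ} (h0 : 0 ≤ i) (h1 : i < r) :
    xx r i * uu r i = uu r (i - 1) + uu r (i + 1) :=
  div_mul_cancel₀ _ (uu_ne_zero h0 h1)

theorem cheb_eval_simples_eq_one_general (r : ℕ) :
    cheb (r + 1) (fun k => if k < r then xx r k else uu r ((r : ℤ) - 1)) = 1 := by
  rcases r with _ | m
  · simp [cheb, uu_eq_one]
  rw [show ((m + 1 : ℕ) : ℤ) - 1 = m by push_cast; ring, cheb_add_two, if_neg (lt_irrefl _)]
  set t : ℕ → FF (m + 1) := fun k => if k < m + 1 then xx (m + 1) k else uu (m + 1) m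
  have recurrence : ∀ k : ℕ, k ≤ m →
      t k * uu (m + 1) k = uu (m + 1) (k - 1) + uu (m + 1) (k + 1) := fun k hk => by
    simpa [t, hk] using xx_mul_uu (r := m + 1) (i := k) (by omega) (by omega)
  have casoratian := cheb_casoratian t (uu (m + 1)) m recurrence
  rw [uu_eq_one (i := m + 1) (by omega), uu_eq_one (i := -1) (by omega)] at casoratian
  linear_combination casoratian

/-- `P_{r+1}(x_0, ..., x_{r-1}, u_{r-1}) = 1`. -/
theorem cheb_eval_simples_eq_one (r : ℕ) (hr : 1 ≤ r) :
    cheb (r + 1) (fun k => if k < r then xx r k else uu r ((r : ℤ) - 1)) = 1 :=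
  cheb_eval_simples_eq_one_general r
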